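/- arXiv:1505.03330 — 5 statements merged into one kernel-verified Lean document; each statement's English description precedes it below -/
import Mathlib

section
/- Let $a : \mathrm{Fin}\, r \to \mathbb{Z}$ and $H = \{v \in \mathbb{N}^r \mid \sum_j v_j a_j \geq 0\}$. Suppose additionally that the group generated by $H$ inside $\mathbb{Z}^r$ is all of $\mathbb{Z}^r$ (equivalently, every $v \in \mathbb{N}^r$ is a difference of two elements of $H$). Then the set of irreducible elements of $H$ has at least $r$ elements. -/
/-- The submonoid of `ℕ^r` of exponent vectors `v` with `∑ j, v j * a j ≥ 0`,
corresponding to `Hol(s₀)`, the Artin L-functions holomorphic at `s₀`. -/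
def Hol (r : ℕ) (a : Fin r → ℤ) : AddSubmonoid (Fin r → ℕ) where
  carrier := {v | 0 ≤ ∑ j, (v j : ℤ) * a j}
  zero_mem' := by simp
  add_mem' := by
    intro u v hu hv
    simp only [Set.mem_setOf_eq, Pi.add_apply] at *
    have h : ∀ j ∈ Finset.univ (α := Fin r),
        ((u j + v j : ℕ) : ℤ) * a j = (u j : ℤ) * a j + (v j : ℤ) * a j := by
      intro j _; push_cast; ring
    rw [Finset.sum_congr rfl h, Finset.sum_add_distrib]
    exact add_nonneg hu hv

/-- `v` is an irreducible element of the submonoid `H` of `ℕ^r`. -/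
def Irred (r : ℕ) (H : AddSubmonoid (Fin r → ℕ)) (v : Fin r → ℕ) : Prop :=
  v ∈ H ∧ v ≠ 0 ∧ ∀ u w, u ∈ H → w ∈ H → v = u + w → u = 0 ∨ w = 0

/-!
If every `a j` is nonnegative, the unit vectors `e j` are irreducible. Otherwise some `a j` is
negative, and writing a unit vector as a difference of two elements of `H` forces some
`a i > 0`. For each `j` let `c j` be the least `c` with `c * a i + a j ≥ 0`; then
`c j • e i + e j` is irreducible: in a splitting, the summand carrying `e j` lies in `H` and is
of the form `d • e i + e j` with `d ≤ c j`, so minimality forces it to be everything.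
-/

lemma mem_Hol {r : ℕ} {a : Fin r → ℤ} {v : Fin r → ℕ} :
    v ∈ Hol r a ↔ 0 ≤ ∑ j, (v j : ℤ) * a j :=
  Iff.rfl

lemma sum_single_add_single_mul {r : ℕ} (a : Fin r → ℤ) (i j : Fin r) (c : ℕ) :
    ∑ k, ((Pi.single i c + Pi.single j 1 : Fin r → ℕ) k : ℤ) * a k = c * a i + a j := by
  simp [Finset.sum_add_distrib, add_mul, Pi.single_apply]

lemma exists_pos_of_mem_Hol {r : ℕ} {a : Fin r → ℤ} {u : Fin r → ℕ} (hu : u ∈ Hol r a)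
    {j : Fin r} (huj : 0 < u j) (haj : a j < 0) : ∃ i, 0 < a i := by
  by_contra! hnonpos
  have hterm : ∀ k ∈ Finset.univ, 0 ≤ -((u k : ℤ) * a k) := fun k _ =>
    neg_nonneg.mpr (mul_nonpos_of_nonneg_of_nonpos (Nat.cast_nonneg _) (hnonpos k))
  have hj := Finset.single_le_sum hterm (Finset.mem_univ j)
  rw [Finset.sum_neg_distrib] at hj
  have huj' : (1 : ℤ) ≤ u j := by exact_mod_cast huj
  nlinarith [mem_Hol.mp hu]

lemma exists_least_mul_add_nonneg {p : ℤ} (hp : 0 < p) (q : ℤ) :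
    ∃ c : ℕ, 0 ≤ c * p + q ∧ ∀ n < c, n * p + q < 0 := by
  have hex : ∃ n : ℕ, 0 ≤ n * p + q :=
    ⟨q.natAbs, by rw [Int.natCast_natAbs]; nlinarith [neg_abs_le q, abs_nonneg q]⟩
  exact ⟨Nat.find hex, Nat.find_spec hex, fun n hn => not_le.mp (Nat.find_min hex hn)⟩

lemma irred_of_apply_eq_one {r : ℕ} {H : AddSubmonoid (Fin r → ℕ)} {v : Fin r → ℕ}
    {j : Fin r} (hv : v ∈ H) (hvj : v j = 1) (hmin : ∀ w ∈ H, w ≤ v → w j = 1 → w = v) :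
    Irred r H v := by
  refine ⟨hv, fun h => by simp [h] at hvj, fun u w hu hw huw => ?_⟩
  have hj : u j + w j = 1 := by rw [← hvj, huw, Pi.add_apply]
  rcases Nat.add_eq_one_iff.mp hj with ⟨-, hwj⟩ | ⟨huj, -⟩
  · obtain rfl := hmin w hw (huw ▸ le_add_self) hwj
    exact .inl (add_eq_right.mp huw.symm)
  · obtain rfl := hmin u hu (huw ▸ le_self_add) huj
    exact .inr (add_eq_left.mp huw.symm)

lemma irred_single_one {r : ℕ} {a : Fin r → ℤ} {j : Fin r} (haj : 0 ≤ a j) :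
    Irred r (Hol r a) (Pi.single j 1) := by
  refine irred_of_apply_eq_one (j := j) ?_ (Pi.single_eq_same j 1) fun w _ hle hwj => ?_
  · simpa [mem_Hol, Pi.single_apply] using haj
  · funext k
    by_cases hk : k = j
    · subst hk; simpa using hwj
    · simpa [Pi.single_eq_of_ne hk] using hle k

lemma irred_single_add_single {r : ℕ} {a : Fin r → ℤ} {i j : Fin r} (hij : i ≠ j) {c : ℕ}
    (hc : 0 ≤ c * a i + a j) (hmin : ∀ n < c, n * a i + a j < 0) :
    Irred r (Hol r a) (Pi.single i c + Pi.single j 1) := by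
  refine irred_of_apply_eq_one (j := j) ?_ (by simp [hij]) fun w hw hle hwj => ?_
  · rwa [mem_Hol, sum_single_add_single_mul]
  have hw_eq : w = Pi.single i (w i) + Pi.single j 1 := by
    funext k
    by_cases hki : k = i
    · subst hki; simp [hij]
    by_cases hkj : k = j
    · subst hkj; simp [hwj, Ne.symm hij]
    · simpa [Pi.single_eq_of_ne hki, Pi.single_eq_of_ne hkj] using hle k
  have hwi : w i = c := by
    have hwc : w i ≤ c := by simpa [hij] using hle i
    have hw' := mem_Hol.mp hw
    rw [hw_eq, sum_single_add_single_mul] at hw'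
    exact le_antisymm hwc (not_lt.mp fun hlt => (hmin _ hlt).not_ge hw')
  rw [hw_eq, hwi]

lemma injective_single_add_single_one {r : ℕ} (i : Fin r) (c : Fin r → ℕ) :
    Function.Injective fun j => (Pi.single i (c j) + Pi.single j 1 : Fin r → ℕ) := by
  intro j j' h
  by_contra hne
  have hj := congrFun h j
  have hj' := congrFun h j'
  simp only [Pi.add_apply, Pi.single_apply, Ne.symm hne, hne] at hj hj'
  split_ifs at hj hj' <;> omega

lemma exists_irred_card_eq_of_nonneg {r : ℕ} {a : Fin r → ℤ} (hnonneg : ∀ j, 0 ≤ a j) :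
    ∃ S : Finset (Fin r → ℕ), (∀ v ∈ S, Irred r (Hol r a) v) ∧ S.card = r := by
  have hinj : Function.Injective fun j : Fin r => (Pi.single j 1 : Fin r → ℕ) := fun j j' h =>
    (by simpa [Pi.single_apply] using congrFun h j' : j' = j).symm
  refine ⟨Finset.univ.image fun j => Pi.single j 1, ?_,
    by simp [Finset.card_image_of_injective _ hinj]⟩
  simp only [Finset.mem_image, Finset.mem_univ, true_and, forall_exists_index,
    forall_apply_eq_imp_iff]
  exact fun j => irred_single_one (hnonneg j)

lemma exists_irred_card_eq_of_pos {r : ℕ} {a : Fin r → ℤ} {i : Fin r} (hai : 0 < a i) :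
    ∃ S : Finset (Fin r → ℕ), (∀ v ∈ S, Irred r (Hol r a) v) ∧ S.card = r := by
  choose c hc hmin using fun j => exists_least_mul_add_nonneg hai (a j)
  refine ⟨Finset.univ.image fun j => Pi.single i (c j) + Pi.single j 1, ?_,
    by simp [Finset.card_image_of_injective _ (injective_single_add_single_one i c)]⟩
  simp only [Finset.mem_image, Finset.mem_univ, true_and, forall_exists_index,
    forall_apply_eq_imp_iff]
  intro j
  by_cases hij : i = j
  · subst hij
    have hci : c i = 0 :=
      Nat.eq_zero_of_not_pos fun h => (hmin i 0 h).not_ge (by simpa using hai.le)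
    simpa [hci] using irred_single_one hai.le
  · exact irred_single_add_single hij (hc j) (hmin j)

theorem hilbert_basis_card_ge (r : ℕ) (a : Fin r → ℤ)
    (hdiff : ∀ v : Fin r → ℕ, ∃ u ∈ Hol r a, ∃ w ∈ Hol r a, v + w = u) :
    ∃ S : Finset (Fin r → ℕ), (∀ v ∈ S, Irred r (Hol r a) v) ∧ S.card = r := by
  by_cases hnonneg : ∀ j, 0 ≤ a j
  · exact exists_irred_card_eq_of_nonneg hnonneg
  obtain ⟨j, haj⟩ := not_forall.mp hnonneg
  obtain ⟨u, hu, w, -, hvwu⟩ := hdiff (Pi.single j 1)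
  have huj : 0 < u j := by rw [← hvwu]; simp
  obtain ⟨i, hai⟩ := exists_pos_of_mem_Hol hu huj (not_le.mp haj)
  exact exists_irred_card_eq_of_pos hai
end

section
/- Let $a : \mathrm{Fin}\, r \to \mathbb{Z}$ with $d_j > 0$ integers satisfying $\sum_j d_j a_j \geq 0$, and let $H = \{v \in \mathbb{N}^r \mid \sum_j v_j a_j \geq 0\}$. Suppose $a_l < 0$ for some $l$, and let $k$ be an index with $a_k > 0$. For each $j$, let $m_j = \min\{m \in \mathbb{N} \mid m\, a_k + a_j \geq 0\}$. Then each vector $m_j e_k + e_j$ is an irreducible element of $H$. -/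
/-! The `j`-th coordinate of `v = c • eₖ + eⱼ` is `1` (for `j = k` minimality forces
`c = 0`), so in a splitting `v = u + w` inside `H` one summand, say `u`, vanishes at `j`
and hence is `u k • eₖ`. Then `w = (c - u k) • eₖ + eⱼ ∈ H` says that `c - u k` satisfies
the inequality defining `c`, and minimality of `c` forces `u k = 0`. -/

section

variable {r : ℕ} {a : Fin r → ℤ} {k j : Fin r} {c : ℕ}

lemma mem_hol_iff {v : Fin r → ℕ} : v ∈ Hol r a ↔ 0 ≤ ∑ j, (v j : ℤ) * a j :=
  Iff.rfl

lemma smul_single_add_single_mem_hol_iff :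
    c • Pi.single k 1 + Pi.single j 1 ∈ Hol r a ↔ 0 ≤ c * a k + a j := by
  simp [mem_hol_iff, Pi.single_apply, add_mul, Finset.sum_add_distrib]

lemma eq_of_add_eq_smul_single_add_single {u w : Fin r → ℕ}
    (h : u + w = c • Pi.single k 1 + Pi.single j 1) (hu : u j = 0) :
    u = u k • Pi.single k 1 ∧ w = (c - u k) • Pi.single k 1 + Pi.single j 1 ∧ u k ≤ c := by
  have hi (i : Fin r) :
      u i + w i = (if i = k then c else 0) + if i = j then 1 else 0 := by
    simpa [Pi.single_apply] using congrFun h i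
  have huk : u k ≤ c := by
    obtain rfl | hkj := eq_or_ne k j
    · simp [hu]
    · have := hi k
      simp only [if_pos, if_neg hkj] at this
      omega
  refine ⟨funext fun i => ?_, funext fun i => ?_, huk⟩ <;>
  · have := hi i
    clear h hi
    obtain rfl | hik := eq_or_ne i k <;> obtain rfl | hij := eq_or_ne i j <;> simp_all <;> omega

lemma eq_zero_of_add_eq_smul_single_add_single
    (hc : c ∈ lowerBounds {n : ℕ | 0 ≤ (n : ℤ) * a k + a j}) {u w : Fin r → ℕ}
    (h : u + w = c • Pi.single k 1 + Pi.single j 1) (hu : u j = 0) (hw : w ∈ Hol r a) :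
    u = 0 := by
  obtain ⟨hu_eq, hw_eq, huk⟩ := eq_of_add_eq_smul_single_add_single h hu
  rw [hw_eq, smul_single_add_single_mem_hol_iff] at hw
  have : c ≤ c - u k := hc hw
  rw [hu_eq, show u k = 0 by omega, zero_smul]

lemma smul_single_add_single_apply_self (hc : IsLeast {n : ℕ | 0 ≤ (n : ℤ) * a k + a j} c) :
    (c • Pi.single k 1 + Pi.single j 1 : Fin r → ℕ) j = 1 := by
  obtain rfl | hjk := eq_or_ne j k
  · have hc0 : c = 0 := Nat.le_zero.1 <| hc.2 <|
      show 0 ≤ ((0 : ℕ) : ℤ) * a j + a j by nlinarith [hc.1.out]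
    simp [hc0]
  · simp [hjk]

theorem irred_smul_single_add_single (hc : IsLeast {n : ℕ | 0 ≤ (n : ℤ) * a k + a j} c) :
    Irred r (Hol r a) (c • Pi.single k 1 + Pi.single j 1) := by
  refine ⟨smul_single_add_single_mem_hol_iff.2 hc.1, fun h => ?_, fun u w hu hw h => ?_⟩
  · have := congrFun h j
    rw [smul_single_add_single_apply_self hc] at this
    exact one_ne_zero this
  · have hj : u j + w j = 1 := by
      rw [← Pi.add_apply, ← h, smul_single_add_single_apply_self hc]
    rcases Nat.add_eq_one_iff.1 hj with ⟨huj, -⟩ | ⟨-, hwj⟩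
    · exact .inl (eq_zero_of_add_eq_smul_single_add_single hc.2 h.symm huj hw)
    · exact .inr <| eq_zero_of_add_eq_smul_single_add_single hc.2
        ((add_comm w u).trans h.symm) hwj hu

end

lemma exists_nat_mul_add_nonneg {a : ℤ} (ha : 0 < a) (b : ℤ) : ∃ n : ℕ, 0 ≤ n * a + b :=
  ⟨b.natAbs, by nlinarith [Int.natCast_natAbs b, neg_le_abs b, abs_nonneg b]⟩

theorem irred_of_min_exponent_general (r : ℕ) (a : Fin r → ℤ)
    (k : Fin r) (hk : 0 < a k)
    (m : Fin r → ℕ) (hm : ∀ j, m j = sInf {n : ℕ | 0 ≤ (n : ℤ) * a k + a j}) :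
    ∀ j, Irred r (Hol r a) (m j • Pi.single k 1 + Pi.single j 1) := by
  intro j
  rw [hm j]
  exact irred_smul_single_add_single (isLeast_csInf (exists_nat_mul_add_nonneg hk (a j)))

theorem irred_of_min_exponent (r : ℕ) (a d : Fin r → ℤ)
    (hd : ∀ j, 0 < d j) (hsum : 0 ≤ ∑ j, d j * a j)
    (hl : ∃ l, a l < 0) (k : Fin r) (hk : 0 < a k)
    (m : Fin r → ℕ) (hm : ∀ j, m j = sInf {n : ℕ | 0 ≤ (n : ℤ) * a k + a j}) :
    ∀ j, Irred r (Hol r a) (m j • Pi.single k 1 + Pi.single j 1) :=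
  irred_of_min_exponent_general r a k hk m hm
end

section
/- Let $a : \mathrm{Fin}\, r \to \mathbb{Z}$ and $H = \{v \in \mathbb{N}^r \mid \sum_j v_j a_j \geq 0\}$, with $r \geq 2$. Suppose: (a) there are positive integers $d_j$ with $\sum_j d_j a_j \geq 0$; (b) every element of $H$ is a sum of irreducibles from a set of exactly $r$ irreducible elements and such decompositions are unique up to order (H is factorial with $r$ irreducibles); (c) for every pair $k \neq l$ in $\{1,\dots,r\}$ there exists $v \in H$ with $v_k > 0$ and $v_l = 0$. Then $a_j \geq 0$ for all $j$ (equivalently $H = \mathbb{N}^r$). -/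
/-!
Write `weight v = ∑ j, v j * a j` and `e_j` for the unit vectors. If `a k < 0`, positivity of `d`
gives `l` with `a l > 0`, and a vector of `H` separating `k` from `l` has nonnegative weight only
if some `l' ≠ l` also has `a l' > 0`. With `α = a l`, `β = a l'`, `γ = -a k`, the vectors
`w = α e_k + γ e_l` and `w' = β e_k + γ e_l'` have weight zero and
`β w + γα e_l' = α w' + γβ e_l`. The unit vectors `e_l`, `e_l'` are atoms, and `e_l'`, having
positive weight, cannot occur in a factorization of `w'`; so the two sides give different
factorizations of the same element.
-/

open Finset

lemma exists_pos_pos_of_sum_mul_nonneg {ι R : Type*} [Fintype ι] [Ring R] [LinearOrder R]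
    [IsStrictOrderedRing R] {c a : ι → R} (hc : ∀ j, 0 ≤ c j) (hsum : 0 ≤ ∑ j, c j * a j)
    {k : ι} (hck : 0 < c k) (hak : a k < 0) : ∃ i, 0 < c i ∧ 0 < a i := by
  by_contra! h
  have hneg : ∑ j, c j * a j < ∑ _j : ι, (0 : R) := by
    refine Finset.sum_lt_sum (fun j _ => ?_) ⟨k, mem_univ k, mul_neg_of_pos_of_neg hck hak⟩
    rcases (hc j).eq_or_lt with hcj | hcj
    · simp [← hcj]
    · exact mul_nonpos_of_nonneg_of_nonpos hcj.le (h j hcj)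
  simp only [sum_const_zero] at hneg
  exact hneg.not_ge hsum

theorem eq_of_sum_eq_of_existsUnique_factorization {M : Type*} [AddCommMonoid M]
    {H : AddSubmonoid M} {S : Finset M} (hSH : ∀ x ∈ S, x ∈ H)
    (hufd : ∀ v ∈ H, ∃! l : Multiset M, (∀ x ∈ l, x ∈ S) ∧ l.sum = v)
    {l₁ l₂ : Multiset M} (h₁ : ∀ x ∈ l₁, x ∈ S) (h₂ : ∀ x ∈ l₂, x ∈ S)
    (h : l₁.sum = l₂.sum) : l₁ = l₂ :=
  (hufd _ (AddSubmonoid.multiset_sum_mem _ _ fun x hx => hSH x (h₁ x hx))).unique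
    ⟨h₁, rfl⟩ ⟨h₂, h.symm⟩

lemma Pi.eq_single_one_of_le {ι : Type*} [DecidableEq ι] {x : ι → ℕ} {m : ι}
    (hle : x ≤ Pi.single m 1) (hx : x ≠ 0) : x = Pi.single m 1 := by
  have hoff : ∀ j ≠ m, x j = 0 := fun j hj => by
    simpa [Pi.single_eq_of_ne hj] using hle j
  have hm : x m ≠ 0 := fun hm => hx (funext fun j => by
    rcases eq_or_ne j m with rfl | hj
    · exact hm
    · exact hoff j hj)
  funext j
  rcases eq_or_ne j m with rfl | hj
  · have := hle j
    simp only [Pi.single_eq_same] at this ⊢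
    omega
  · rw [hoff j hj, Pi.single_eq_of_ne hj]

lemma Multiset.single_one_mem_of_sum_eq {ι : Type*} [DecidableEq ι] {L : Multiset (ι → ℕ)}
    (h0 : ∀ x ∈ L, x ≠ 0) {m : ι} (hL : L.sum = Pi.single m 1) : Pi.single m 1 ∈ L := by
  obtain ⟨x, hx⟩ := L.exists_mem_of_ne_zero fun hL0 => by
    simpa [hL0] using congrFun hL m
  rwa [← Pi.eq_single_one_of_le (hL ▸ Multiset.le_sum_of_mem hx) (h0 x hx)]

def weight {ι : Type*} [Fintype ι] (a : ι → ℤ) : (ι → ℕ) →+ ℤ where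
  toFun v := ∑ j, (v j : ℤ) * a j
  map_zero' := by simp
  map_add' u v := by simp only [Pi.add_apply, Nat.cast_add, add_mul, sum_add_distrib]

lemma weight_single {ι : Type*} [Fintype ι] [DecidableEq ι] (a : ι → ℤ) (k : ι) (c : ℕ) :
    weight a (Pi.single k c) = c * a k := by
  simp [weight, Pi.single_apply]

lemma mem_Hol_iff {r : ℕ} {a : Fin r → ℤ} {v : Fin r → ℕ} : v ∈ Hol r a ↔ 0 ≤ weight a v :=
  Iff.rfl

lemma weight_le_of_mem {r : ℕ} {a : Fin r → ℤ} {L : Multiset (Fin r → ℕ)}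
    (hL : ∀ y ∈ L, y ∈ Hol r a) {x : Fin r → ℕ} (hx : x ∈ L) : weight a x ≤ weight a L.sum := by
  rw [map_multiset_sum]
  refine Multiset.single_le_sum (fun z hz => ?_) _ (Multiset.mem_map_of_mem _ hx)
  obtain ⟨y, hy, rfl⟩ := Multiset.mem_map.1 hz
  exact hL y hy

lemma single_one_mem_of_nonneg {r : ℕ} {a : Fin r → ℤ} {S : Finset (Fin r → ℕ)}
    (hS : ∀ v ∈ S, Irred r (Hol r a) v)
    (hufd : ∀ v ∈ Hol r a, ∃! l : Multiset (Fin r → ℕ), (∀ x ∈ l, x ∈ S) ∧ l.sum = v)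
    {m : Fin r} (hm : 0 ≤ a m) : Pi.single m 1 ∈ S := by
  obtain ⟨L, ⟨hLS, hLsum⟩, -⟩ :=
    hufd (Pi.single m 1) (mem_Hol_iff.2 (by simpa [weight_single] using hm))
  exact hLS _ (Multiset.single_one_mem_of_sum_eq (fun x hx => (hS x (hLS x hx)).2.1) hLsum)

lemma Multiset.forall_mem_nsmul_add_replicate {α : Type*} {p : α → Prop} {F : Multiset α}
    (hF : ∀ x ∈ F, p x) {y : α} (hy : p y) (n m : ℕ) :
    ∀ x ∈ n • F + Multiset.replicate m y, p x := by
  intro x hx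
  rcases Multiset.mem_add.1 hx with hx | hx
  · exact hF x (Multiset.mem_of_mem_nsmul hx)
  · rwa [Multiset.eq_of_mem_replicate hx]

lemma nsmul_single_add_single_relation {ι : Type*} [DecidableEq ι] (k l l' : ι) (α β γ : ℕ) :
    β • (Pi.single k α + Pi.single l γ) + (γ * α) • Pi.single l' 1 =
      α • (Pi.single k β + Pi.single l' γ) + (γ * β) • (Pi.single l 1 : ι → ℕ) := by
  simp only [smul_add, ← Pi.single_smul', smul_eq_mul, mul_one]
  rw [mul_comm β α, mul_comm β γ, mul_comm α γ]
  abel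

theorem not_existsUnique_factorization_of_neg_of_pos_of_pos {r : ℕ} {a : Fin r → ℤ}
    {S : Finset (Fin r → ℕ)} (hS : ∀ v ∈ S, Irred r (Hol r a) v) {k l l' : Fin r}
    (hll' : l ≠ l') (hk : a k < 0) (hl : 0 < a l) (hl' : 0 < a l') :
    ¬ ∀ v ∈ Hol r a, ∃! L : Multiset (Fin r → ℕ), (∀ x ∈ L, x ∈ S) ∧ L.sum = v := by
  intro hufd
  obtain ⟨α, hα⟩ := Int.eq_ofNat_of_zero_le hl.le
  obtain ⟨β, hβ⟩ := Int.eq_ofNat_of_zero_le hl'.le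
  obtain ⟨γ, hγ⟩ := Int.exists_eq_neg_ofNat hk.le
  have hSH : ∀ x ∈ S, x ∈ Hol r a := fun x hx => (hS x hx).1
  set w : Fin r → ℕ := Pi.single k α + Pi.single l γ
  set w' : Fin r → ℕ := Pi.single k β + Pi.single l' γ
  have hw : weight a w = 0 := by simp [w, weight_single, hα, hγ]; ring
  have hw' : weight a w' = 0 := by simp [w', weight_single, hβ, hγ]; ring
  obtain ⟨F, ⟨hFS, hFsum⟩, -⟩ := hufd w (mem_Hol_iff.2 hw.ge)
  obtain ⟨F', ⟨hF'S, hF'sum⟩, -⟩ := hufd w' (mem_Hol_iff.2 hw'.ge)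
  have hF' : Pi.single l' 1 ∉ F' := fun hmem => by
    have := weight_le_of_mem (fun y hy => hSH y (hF'S y hy)) hmem
    rw [hF'sum, hw', weight_single, hβ] at this
    omega
  have hfac : β • F + Multiset.replicate (γ * α) (Pi.single l' 1) =
      α • F' + Multiset.replicate (γ * β) (Pi.single l 1) :=
    eq_of_sum_eq_of_existsUnique_factorization hSH hufd
      (Multiset.forall_mem_nsmul_add_replicate hFS
        (single_one_mem_of_nonneg hS hufd hl'.le) _ _)
      (Multiset.forall_mem_nsmul_add_replicate hF'S
        (single_one_mem_of_nonneg hS hufd hl.le) _ _)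
      (by simpa only [Multiset.sum_add, Multiset.sum_nsmul, Multiset.sum_replicate, hFsum,
        hF'sum] using nsmul_single_add_single_relation k l l' α β γ)
  have hmem : Pi.single l' 1 ∈ α • F' + Multiset.replicate (γ * β) (Pi.single l 1) :=
    hfac ▸ Multiset.mem_add.2
      (Or.inr (Multiset.mem_replicate.2 ⟨(Nat.mul_pos (by omega) (by omega)).ne', rfl⟩))
  rcases Multiset.mem_add.1 hmem with h | h
  · exact hF' (Multiset.mem_of_mem_nsmul h)
  · simpa [Pi.single_eq_of_ne hll'.symm] using congrFun (Multiset.eq_of_mem_replicate h) l'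

theorem artin_conjecture_of_factorial_general (r : ℕ) (a : Fin r → ℤ)
    (d : Fin r → ℤ) (hd : ∀ j, 0 < d j) (hsum : 0 ≤ ∑ j, d j * a j)
    (hfact : ∃ S : Finset (Fin r → ℕ), S.card = r ∧ (∀ v ∈ S, Irred r (Hol r a) v) ∧
      ∀ v ∈ Hol r a, ∃! l : Multiset (Fin r → ℕ), (∀ x ∈ l, x ∈ S) ∧ l.sum = v)
    (hsep : ∀ k l : Fin r, k ≠ l → ∃ v ∈ Hol r a, 0 < v k ∧ v l = 0) :
    ∀ j, 0 ≤ a j := by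
  obtain ⟨S, -, hS, hufd⟩ := hfact
  intro k
  by_contra! hk
  obtain ⟨l, -, hl⟩ := exists_pos_pos_of_sum_mul_nonneg (fun j => (hd j).le) hsum (hd k) hk
  obtain ⟨v, hv, hvk, hvl⟩ := hsep k l (by rintro rfl; exact hl.not_gt hk)
  obtain ⟨l', hvl', hl'⟩ := exists_pos_pos_of_sum_mul_nonneg (c := fun j => (v j : ℤ))
    (fun j => Nat.cast_nonneg _) hv (Nat.cast_pos.2 hvk) hk
  exact not_existsUnique_factorization_of_neg_of_pos_of_pos hS
    (by rintro rfl; simp [hvl] at hvl') hk hl hl' hufd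

theorem artin_conjecture_of_factorial (r : ℕ) (hr : 2 ≤ r) (a : Fin r → ℤ)
    (d : Fin r → ℤ) (hd : ∀ j, 0 < d j) (hsum : 0 ≤ ∑ j, d j * a j)
    (hfact : ∃ S : Finset (Fin r → ℕ), S.card = r ∧ (∀ v ∈ S, Irred r (Hol r a) v) ∧
      ∀ v ∈ Hol r a, ∃! l : Multiset (Fin r → ℕ), (∀ x ∈ l, x ∈ S) ∧ l.sum = v)
    (hsep : ∀ k l : Fin r, k ≠ l → ∃ v ∈ Hol r a, 0 < v k ∧ v l = 0) :
    ∀ j, 0 ≤ a j :=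
  artin_conjecture_of_factorial_general r a d hd hsum hfact hsep
end

section
/- Let $H$ be a submonoid of $\mathbb{N}^r$ such that every element of $H$ is a sum of elements from a finite set $S$ of irreducible elements of $H$, with such decompositions unique up to permutation, and suppose $|S| = r$ and the subgroup of $\mathbb{Z}^r$ generated by $H$ is all of $\mathbb{Z}^r$. Then the elements of $S$ form a basis of $\mathbb{Z}^r$ as a free abelian group. -/
theorem AddSubmonoid.le_closure_of_forall_exists_multiset_sum {M : Type*} [AddCommMonoid M]
    {H : AddSubmonoid M} {S : Set M}
    (h : ∀ v ∈ H, ∃ l : Multiset M, (∀ x ∈ l, x ∈ S) ∧ l.sum = v) :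
    H ≤ AddSubmonoid.closure S := by
  intro v hv
  obtain ⟨l, hlS, rfl⟩ := h v hv
  exact AddSubmonoid.multiset_sum_mem _ l fun x hx => AddSubmonoid.subset_closure (hlS x hx)

theorem AddSubgroup.closure_image_le_closure_image_of_le_closure {M G : Type*} [AddMonoid M]
    [AddGroup G] (c : M →+ G) {H : AddSubmonoid M} {S : Set M}
    (hHS : H ≤ AddSubmonoid.closure S) :
    AddSubgroup.closure (c '' H) ≤ AddSubgroup.closure (c '' S) := by
  rw [AddSubgroup.closure_le]
  rintro _ ⟨v, hv, rfl⟩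
  have hcv : c v ∈ AddSubmonoid.closure (c '' S) := by
    rw [← AddMonoidHom.map_mclosure]
    exact AddSubmonoid.mem_map_of_mem c (hHS hv)
  exact AddSubgroup.le_closure_toAddSubmonoid _ hcv

theorem hilbert_basis_is_basis_general (r : ℕ) (H : AddSubmonoid (Fin r → ℕ))
    (S : Finset (Fin r → ℕ)) (hcard : S.card = r)
    (hfact : ∀ v ∈ H, ∃! l : Multiset (Fin r → ℕ), (∀ x ∈ l, x ∈ S) ∧ l.sum = v)
    (hgen : AddSubgroup.closure
        ((fun v : Fin r → ℕ => fun j => (v j : ℤ)) '' (H : Set (Fin r → ℕ))) = ⊤) :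
    ∃ b : Module.Basis S ℤ (Fin r → ℤ), ∀ s : S, b s = fun j => ((s : Fin r → ℕ) j : ℤ) := by
  let c : (Fin r → ℕ) →+ (Fin r → ℤ) := (Nat.castAddMonoidHom ℤ).compLeft (Fin r)
  have hHS : H ≤ AddSubmonoid.closure S :=
    AddSubmonoid.le_closure_of_forall_exists_multiset_sum fun v hv => (hfact v hv).exists
  have hspan : ⊤ ≤ Submodule.span ℤ (Set.range fun s : S => c s) := by
    have hrange : Set.range (fun s : S => c s) = c '' S := by ext; simp
    rw [← Submodule.toAddSubgroup_le, Submodule.span_int_eq_addSubgroupClosure, hrange,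
      Submodule.top_toAddSubgroup, ← hgen]
    exact AddSubgroup.closure_image_le_closure_image_of_le_closure c hHS
  have hcard' : Fintype.card S = Module.finrank ℤ (Fin r → ℤ) := by simp [hcard]
  exact ⟨basisOfTopLeSpanOfCardEqFinrank _ hspan hcard', fun s =>
    congrFun (coe_basisOfTopLeSpanOfCardEqFinrank _ hspan hcard') s⟩

theorem hilbert_basis_is_basis (r : ℕ) (H : AddSubmonoid (Fin r → ℕ))
    (S : Finset (Fin r → ℕ)) (hS : ∀ v ∈ S, Irred r H v) (hcard : S.card = r)
    (hfact : ∀ v ∈ H, ∃! l : Multiset (Fin r → ℕ), (∀ x ∈ l, x ∈ S) ∧ l.sum = v)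
    (hgen : AddSubgroup.closure
        ((fun v : Fin r → ℕ => fun j => (v j : ℤ)) '' (H : Set (Fin r → ℕ))) = ⊤) :
    ∃ b : Module.Basis S ℤ (Fin r → ℤ), ∀ s : S, b s = fun j => ((s : Fin r → ℕ) j : ℤ) :=
  hilbert_basis_is_basis_general r H S hcard hfact hgen
end

section
/- Let $a : \mathrm{Fin}\, r \to \mathbb{Z}$, $H = \{v \in \mathbb{N}^r \mid \sum_j v_j a_j \geq 0\}$, and suppose $a_k > 0$ and $a_l < 0$ for some indices $k \neq l$. Define $m_j = \min\{m \in \mathbb{N} \mid m\,a_k + a_j \geq 0\}$ for each $j$. If every element of $H$ decomposes as a sum of elements from $\{m_1 e_k + e_1, \dots, m_r e_k + e_r\}$, then every $v \in H$ with $v_l > 0$ satisfies $v_k \geq m_l > 0$. -/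
namespace Multiset

variable {r : ℕ} (m : Fin r → ℕ) (k : Fin r) (L : Multiset (Fin r))

theorem sum_map_smul_single_add_single_apply_of_ne {i : Fin r} (hik : i ≠ k) :
    ((L.map fun j => m j • Pi.single k 1 + Pi.single j 1).sum : Fin r → ℕ) i = L.count i := by
  induction L using Multiset.induction_on with
  | empty => simp
  | cons j L ih =>
    rw [map_cons, sum_cons, Pi.add_apply, ih, count_cons]
    simp [Pi.single_apply, hik, add_comm]

theorem le_sum_map_smul_single_add_single_apply {j : Fin r} (hj : j ∈ L) :
    m j ≤ ((L.map fun j => m j • Pi.single k 1 + Pi.single j 1).sum : Fin r → ℕ) k := by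
  obtain ⟨L, rfl⟩ := exists_cons_of_mem hj
  rw [map_cons, sum_cons, Pi.add_apply, Pi.add_apply]
  simp only [Pi.smul_apply, Pi.single_eq_same, smul_eq_mul, mul_one]
  omega

end Multiset

theorem Nat.sInf_nonneg_mul_add_pos {c b : ℤ} (hc : 0 < c) (hb : b < 0) :
    0 < sInf {n : ℕ | 0 ≤ (n : ℤ) * c + b} := by
  have hne : b.natAbs ∈ {n : ℕ | 0 ≤ (n : ℤ) * c + b} := by
    simp only [Set.mem_ofPred_eq, Int.natCast_natAbs, abs_of_neg hb]
    nlinarith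
  refine Nat.pos_of_ne_zero fun h0 => ?_
  have hmem := Nat.sInf_mem ⟨_, hne⟩
  rw [h0] at hmem
  simp only [Set.mem_ofPred_eq, Nat.cast_zero, zero_mul, zero_add] at hmem
  omega

theorem divisibility_forced_general (r : ℕ) (a : Fin r → ℤ) (k l : Fin r)
    (hk : 0 < a k) (hl : a l < 0)
    (m : Fin r → ℕ) (hm : ∀ j, m j = sInf {n : ℕ | 0 ≤ (n : ℤ) * a k + a j})
    (hdec : ∀ v ∈ Hol r a, ∃ L : Multiset (Fin r),
      v = (L.map fun j => m j • Pi.single k 1 + Pi.single j 1).sum) :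
    ∀ v ∈ Hol r a, 0 < v l → m l ≤ v k ∧ 0 < m l := by
  intro v hv hvl
  have hlk : l ≠ k := ne_of_apply_ne a (hl.trans hk).ne
  obtain ⟨L, rfl⟩ := hdec v hv
  have hlL : l ∈ L := by
    rw [Multiset.sum_map_smul_single_add_single_apply_of_ne m k L hlk] at hvl
    exact Multiset.count_pos.mp hvl
  exact ⟨Multiset.le_sum_map_smul_single_add_single_apply m k L hlL,
    hm l ▸ Nat.sInf_nonneg_mul_add_pos hk hl⟩

theorem divisibility_forced (r : ℕ) (a : Fin r → ℤ) (k l : Fin r) (hkl : k ≠ l)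
    (hk : 0 < a k) (hl : a l < 0)
    (m : Fin r → ℕ) (hm : ∀ j, m j = sInf {n : ℕ | 0 ≤ (n : ℤ) * a k + a j})
    (hdec : ∀ v ∈ Hol r a, ∃ L : Multiset (Fin r),
      v = (L.map fun j => m j • Pi.single k 1 + Pi.single j 1).sum) :
    ∀ v ∈ Hol r a, 0 < v l → m l ≤ v k ∧ 0 < m l :=
  divisibility_forced_general r a k l hk hl m hm hdec
end
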